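/- arXiv:2406.03570 — 8 statements merged into one kernel-verified Lean document; each statement's English description precedes it below -/
import Mathlib

section
/- For every even integer n ≥ 2, with the even-case weights one has: (i) a_0 + a_1 + ··· + a_{n+1} = d + 1; (ii) b·a_n + a_{n+1} = d; and (iii) a_1 + a_2 + ··· + a_{n−1} + a_n + c·a_{n+1} = d. (Equivalently, the polynomial x_0^2 + x_1^3 + ··· + x_{n−1}^{s_{n−1}} + x_n^b·x_{n+1} + x_1···x_{n−1}·x_n·x_{n+1}^c is weighted homogeneous of degree d for the weights a_0, ..., a_{n+1}.) -/
/-- The Sylvester sequence: `s 0 = 2` and `s (k+1) = s 0 * s 1 * ⋯ * s k + 1`,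
equivalently `s (k+1) = s k * (s k - 1) + 1`. -/
def sylvester : ℕ → ℕ
  | 0 => 2
  | n + 1 => sylvester n * (sylvester n - 1) + 1

lemma sylvester_ge_two : ∀ n, 2 ≤ sylvester n
  | 0 => le_refl _
  | n + 1 => by
      have h := sylvester_ge_two n
      simp only [sylvester]
      nlinarith [Nat.sub_le (sylvester n) 1, Nat.le_sub_one_of_lt (lt_of_lt_of_le Nat.one_lt_two h)]

lemma sylvester_cast (n : ℕ) :
    ((sylvester (n+1) : ℤ)) = (sylvester n : ℤ) * ((sylvester n : ℤ) - 1) + 1 := by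
  have h := sylvester_ge_two n
  simp only [sylvester]
  push_cast [Nat.le_of_succ_le h]
  ring

lemma key_sum (a : ℕ → ℤ) (d : ℤ) : ∀ m, (∀ i < m, a i * (sylvester i : ℤ) = d) →
    (∑ i ∈ Finset.range m, a i) * ((sylvester m : ℤ) - 1) = ((sylvester m : ℤ) - 2) * d := by
  intro m
  induction m with
  | zero => intro _; simp [sylvester]
  | succ m ih =>
    intro h
    have h1 := ih (fun i hi => h i (hi.trans (Nat.lt_succ_self m)))
    have h2 := h m (Nat.lt_succ_self m)
    rw [Finset.sum_range_succ, sylvester_cast]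
    nlinarith [h1, h2]


/-- For even `n ≥ 2`, with the even-case weights: the sum of the weights is `d + 1`,
and each monomial of the defining equation has weighted degree `d`. -/
theorem even_case_weighted_homogeneous (n : ℕ) (hn : 2 ≤ n) (he : Even n)
    (an an1 d b c : ℤ) (a : ℕ → ℤ)
    (han : 4 * an = (sylvester n : ℤ) ^ 2 + (sylvester n : ℤ) - 4)
    (han1 : 2 * an1 = ((sylvester n : ℤ) - 1) * an - (sylvester n : ℤ) - 1)
    (hd : d = (-1 + an + an1) * ((sylvester n : ℤ) - 1))
    (ha : ∀ i < n, a i * (sylvester i : ℤ) = d)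
    (hAn : a n = an) (hAn1 : a (n + 1) = an1)
    (hb : 2 * b = (sylvester n : ℤ) ^ 2 - (sylvester n : ℤ) - 4)
    (hc : 2 * c = (sylvester n : ℤ) + 3) :
    (∑ i ∈ Finset.range (n + 2), a i) = d + 1 ∧
    b * a n + a (n + 1) = d ∧
    (∑ i ∈ Finset.Ico 1 (n + 1), a i) + c * a (n + 1) = d := by
  set s : ℤ := (sylvester n : ℤ) with hs
  have hs2 : (2 : ℤ) ≤ s := by rw [hs]; exact_mod_cast sylvester_ge_two n
  have hsne : s - 1 ≠ 0 := by omega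
  have hK := key_sum a d n ha
  rw [← hs] at hK
  set S : ℤ := ∑ i ∈ Finset.range n, a i with hS
  have hSe : S = (s - 2) * (-1 + an + an1) := by
    have : S * (s - 1) = ((s - 2) * (-1 + an + an1)) * (s - 1) := by
      rw [hK, hd]; ring
    exact mul_right_cancel₀ hsne this
  have ha0 : a 0 * 2 = d := by
    have := ha 0 (by omega)
    simpa [sylvester] using this
  -- staged scalar identities
  have h1' : 8 * an1 = (s - 1) * (s ^ 2 + s - 4) - 4 * s - 4 := by
    linear_combination 4 * han1 + (s - 1) * han
  have hban : 8 * (b * an) = (s ^ 2 - s - 4) * (s ^ 2 + s - 4) := by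
    linear_combination (4 * an) * hb + (s ^ 2 - s - 4) * han
  have hd8 : 8 * d = (s - 1) * (-8 + 2 * (s ^ 2 + s - 4) +
      ((s - 1) * (s ^ 2 + s - 4) - 4 * s - 4)) := by
    linear_combination 8 * hd + 2 * (s - 1) * han + (s - 1) * h1'
  have hca : 16 * (c * an1) = (s + 3) * ((s - 1) * (s ^ 2 + s - 4) - 4 * s - 4) := by
    linear_combination (8 * an1) * hc + (s + 3) * h1'
  -- part (ii)
  have h2 : b * a n + a (n + 1) = d := by
    have h8 : 8 * (b * a n + a (n + 1)) = 8 * d := by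
      rw [hAn, hAn1]
      linear_combination hban + h1' - hd8
    linarith
  -- part (i)
  have h1 : (∑ i ∈ Finset.range (n + 2), a i) = d + 1 := by
    rw [Finset.sum_range_succ, Finset.sum_range_succ, ← hS, hAn, hAn1, hd, hSe]
    ring
  refine ⟨h1, h2, ?_⟩
  -- part (iii)
  have hsplit : (∑ i ∈ Finset.range (n + 1), a i) = a 0 + ∑ i ∈ Finset.Ico 1 (n + 1), a i := by
    rw [Finset.range_eq_Ico, Finset.sum_eq_sum_Ico_succ_bot (by omega)]
  have hsum : (∑ i ∈ Finset.Ico 1 (n + 1), a i) = S + an - a 0 := by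
    have h := Finset.sum_range_succ a n
    rw [hsplit, hAn] at h
    linarith [h, hS]
  have h16 : 16 * ((∑ i ∈ Finset.Ico 1 (n + 1), a i) + c * a (n + 1)) = 16 * d := by
    rw [hsum, hAn1, hSe]
    linear_combination hca - 8 * ha0 - 3 * hd8 + (4 * (s - 2) + 4) * han + 2 * (s - 2) * h1'
  linarith
end

section
/- For every odd integer n ≥ 3, with the odd-case weights one has: (i) a_0 + a_1 + ··· + a_{n+1} = d + 1; (ii) b·a_n + a_{n+1} = d; and (iii) a_1 + a_2 + ··· + a_{n−1} + 2a_n + c·a_{n+1} = d. (Equivalently, the polynomial x_0^2 + x_1^3 + ··· + x_{n−1}^{s_{n−1}} + x_n^b·x_{n+1} + x_1···x_{n−1}·x_n^2·x_{n+1}^c is weighted homogeneous of degree d for the weights a_0, ..., a_{n+1}.) -/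
lemma sylvester_two_le (n : ℕ) : 2 ≤ sylvester n := by
  induction n with
  | zero => simp [sylvester]
  | succ k ih =>
    have h1 : 1 ≤ sylvester k - 1 := by omega
    have := Nat.mul_le_mul ih h1
    simp only [sylvester]
    omega

lemma sylvester_cast_succ (n : ℕ) :
    ((sylvester (n + 1) : ℤ)) = (sylvester n : ℤ) ^ 2 - (sylvester n : ℤ) + 1 := by
  have h := sylvester_two_le n
  show ((sylvester n * (sylvester n - 1) + 1 : ℕ) : ℤ) = _
  push_cast [Nat.cast_sub (by omega : 1 ≤ sylvester n)]
  ring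

lemma sylvester_sum_key (n : ℕ) (d : ℤ) (a : ℕ → ℤ)
    (ha : ∀ i < n, a i * (sylvester i : ℤ) = d) :
    (∑ i ∈ Finset.range n, a i) * ((sylvester n : ℤ) - 1)
      = d * ((sylvester n : ℤ) - 2) := by
  induction n with
  | zero => simp [sylvester]
  | succ k ih =>
    have ih' := ih (fun i hi => ha i (by omega))
    have hk := ha k (Nat.lt_succ_self k)
    rw [Finset.sum_range_succ, sylvester_cast_succ]
    linear_combination (sylvester k : ℤ) * ih' + ((sylvester k : ℤ) - 1) * hk

/-- For odd `n ≥ 3`, with the odd-case weights: the sum of the weights is `d + 1`,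
and each monomial of the defining equation has weighted degree `d`. -/
theorem odd_case_weighted_homogeneous (n : ℕ) (hn : 3 ≤ n) (ho : Odd n)
    (an an1 d b c : ℤ) (a : ℕ → ℤ)
    (han : 4 * an = (sylvester n : ℤ) ^ 2 + 3 * (sylvester n : ℤ) - 6)
    (han1 : 4 * an1 = ((sylvester n : ℤ) - 3) * an - (sylvester n : ℤ) - 1)
    (hd : d = (-1 + an + an1) * ((sylvester n : ℤ) - 1))
    (ha : ∀ i < n, a i * (sylvester i : ℤ) = d)
    (hAn : a n = an) (hAn1 : a (n + 1) = an1)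
    (hb : 4 * b = (sylvester n : ℤ) ^ 2 - (sylvester n : ℤ) - 2)
    (hc : 2 * c = (sylvester n : ℤ) + 5) :
    (∑ i ∈ Finset.range (n + 2), a i) = d + 1 ∧
    b * a n + a (n + 1) = d ∧
    (∑ i ∈ Finset.Ico 1 n, a i) + 2 * a n + c * a (n + 1) = d := by
  set s : ℤ := (sylvester n : ℤ) with hs
  have hs2 : (2 : ℤ) ≤ s := by rw [hs]; exact_mod_cast sylvester_two_le n
  have key := sylvester_sum_key n d a ha
  -- the sum over `range n`
  have hsum : (∑ i ∈ Finset.range n, a i) = d + 1 - an - an1 := by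
    have h0 : ((∑ i ∈ Finset.range n, a i) - (d + 1 - an - an1)) * (s - 1) = 0 := by
      linear_combination key - hd
    rcases mul_eq_zero.mp h0 with h | h
    · linarith
    · exfalso; linarith
  refine ⟨?_, ?_, ?_⟩
  · rw [Finset.sum_range_succ, Finset.sum_range_succ, hsum, hAn, hAn1]; ring
  · rw [hAn, hAn1]
    have h256 : 256 * (b * an + an1) = 256 * d := by
      linear_combination (-64 : ℤ) * han + (64 * (2 - s)) * han1 + (-256 : ℤ) * hd
        + (64 * an) * hb
    linarith
  · have h0 : a 0 * (sylvester 0 : ℤ) = d := ha 0 (by omega)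
    have h0' : a 0 * 2 = d := by simpa [sylvester] using h0
    have hIco : (∑ i ∈ Finset.Ico 1 n, a i) = (∑ i ∈ Finset.range n, a i) - a 0 := by
      rw [Finset.range_eq_Ico, Finset.sum_eq_sum_Ico_succ_bot (by omega : 0 < n)]
      ring
    rw [hAn, hAn1]
    have h8 : 8 * ((∑ i ∈ Finset.Ico 1 n, a i) + 2 * an + c * an1) = 8 * d := by
      linear_combination 8 * hIco + 8 * hsum - 4 * h0' + (4 * an1) * hc
        + 4 * han1 - 4 * hd
    linarith
end

section
/- For every even integer n ≥ 2, with the even-case weights and r := −1 + a_n + a_{n+1} = d/(s_n − 1), one has gcd(r, a_n) = 1, gcd(r, a_{n+1}) = 1, gcd(s_n − 1, a_n) = 1, gcd(s_n − 1, a_{n+1}) = 1, and gcd(a_n, a_{n+1}) = 1; consequently gcd(a_i, a_{n+1}) = 1 for every i = 0, ..., n and gcd(a_i, a_n) = 1 for every i = 0, ..., n−1. -/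
lemma sylvester_succ (m : ℕ) : sylvester (m + 1) = sylvester m * (sylvester m - 1) + 1 := rfl

/-- For even indices `≥ 2` the Sylvester number is `≡ 7 (mod 8)`. -/
lemma sylvester_even_mod8 (k : ℕ) (hk : 1 ≤ k) : sylvester (2 * k) % 8 = 7 := by
  induction k, hk using Nat.le_induction with
  | base => rfl
  | succ k hk ih =>
    obtain ⟨q, hq⟩ : ∃ q, sylvester (2 * k) = 8 * q + 7 := ⟨sylvester (2 * k) / 8, by omega⟩
    have e1 : sylvester (2 * k + 1) = 64 * (q * q) + 104 * q + 43 := by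
      rw [sylvester_succ, hq]
      have h6 : 8 * q + 7 - 1 = 8 * q + 6 := by omega
      rw [h6]; ring
    obtain ⟨p, hp⟩ : ∃ p, sylvester (2 * k + 1) = 8 * p + 3 := by
      refine ⟨sylvester (2 * k + 1) / 8, ?_⟩
      obtain ⟨Q, hQ⟩ : ∃ Q, sylvester (2 * k + 1) = 64 * Q + 104 * q + 43 := ⟨q * q, e1⟩
      omega
    have e2 : sylvester (2 * k + 1 + 1) = 64 * (p * p) + 40 * p + 7 := by
      rw [sylvester_succ, hp]
      have h2 : 8 * p + 3 - 1 = 8 * p + 2 := by omega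
      rw [h2]; ring
    have h22 : 2 * (k + 1) = 2 * k + 1 + 1 := by ring
    rw [h22]
    obtain ⟨P, hP⟩ : ∃ P, sylvester (2 * k + 1 + 1) = 64 * P + 40 * p + 7 := ⟨p * p, e2⟩
    omega

/-- If a Bézout-type combination of `x` and `y` is a power of two and `y` is odd,
then `gcd x y = 1`. -/
lemma int_gcd_eq_one_of_bezout_pow2 (x y : ℤ) (c : ℕ) (u v : ℤ)
    (h : u * x + v * y = 2 ^ c) (hodd : y % 2 = 1) : Int.gcd x y = 1 := by
  have hx : (Int.gcd x y : ℤ) ∣ x := Int.gcd_dvd_left x y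
  have hy : (Int.gcd x y : ℤ) ∣ y := Int.gcd_dvd_right x y
  have h2 : (Int.gcd x y : ℤ) ∣ 2 ^ c := h ▸ dvd_add (hx.mul_left u) (hy.mul_left v)
  have h2' : Int.gcd x y ∣ 2 ^ c := by exact_mod_cast h2
  have hodd' : ¬ 2 ∣ Int.gcd x y := by
    intro h2d
    have h2y : (2 : ℤ) ∣ y := dvd_trans (by exact_mod_cast h2d) hy
    omega
  rcases (Nat.dvd_prime_pow Nat.prime_two).mp h2' with ⟨i, _, hi⟩
  cases i with
  | zero => simpa using hi
  | succ j => exact absurd (hi ▸ dvd_pow_self 2 (Nat.succ_ne_zero j)) hodd'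

/-- If `v ∣ y * z`, `gcd y w = 1` and `gcd z w = 1`, then `gcd v w = 1`. -/
lemma int_gcd_eq_one_of_dvd_mul (v w y z : ℤ) (hv : v ∣ y * z)
    (h1 : Int.gcd y w = 1) (h2 : Int.gcd z w = 1) : Int.gcd v w = 1 := by
  have hk1 : (Int.gcd v w : ℤ) ∣ v := Int.gcd_dvd_left v w
  have hk2 : (Int.gcd v w : ℤ) ∣ w := Int.gcd_dvd_right v w
  have hc1 : IsCoprime y ((Int.gcd v w : ℤ)) :=
    (Int.isCoprime_iff_gcd_eq_one.mpr h1).of_isCoprime_of_dvd_right hk2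
  have hkz : (Int.gcd v w : ℤ) ∣ z := hc1.symm.dvd_of_dvd_mul_left (hk1.trans hv)
  have hgg : (Int.gcd v w : ℤ) ∣ (Int.gcd z w : ℤ) := Int.dvd_coe_gcd hkz hk2
  rw [h2] at hgg
  have : Int.gcd v w ∣ 1 := by exact_mod_cast hgg
  exact Nat.dvd_one.mp this

/-- For even `n ≥ 2`, with the even-case weights and `r = -1 + aₙ + aₙ₊₁ = d/(sₙ - 1)`:
the coprimality statements needed for well-formedness. -/
theorem even_case_weights_coprime (n : ℕ) (hn : 2 ≤ n) (he : Even n)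
    (an an1 d r : ℤ) (a : ℕ → ℤ)
    (han : 4 * an = (sylvester n : ℤ) ^ 2 + (sylvester n : ℤ) - 4)
    (han1 : 2 * an1 = ((sylvester n : ℤ) - 1) * an - (sylvester n : ℤ) - 1)
    (hr : r = -1 + an + an1)
    (hd : d = r * ((sylvester n : ℤ) - 1))
    (ha : ∀ i < n, a i * (sylvester i : ℤ) = d)
    (hAn : a n = an) (hAn1 : a (n + 1) = an1) :
    Int.gcd r an = 1 ∧ Int.gcd r an1 = 1 ∧
    Int.gcd ((sylvester n : ℤ) - 1) an = 1 ∧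
    Int.gcd ((sylvester n : ℤ) - 1) an1 = 1 ∧
    Int.gcd an an1 = 1 ∧
    (∀ i ≤ n, Int.gcd (a i) an1 = 1) ∧
    (∀ i < n, Int.gcd (a i) an = 1) := by
  set s : ℤ := (sylvester n : ℤ) with hs
  -- s ≡ 7 (mod 8)
  obtain ⟨m, hm⟩ := he
  have h8 : sylvester n % 8 = 7 := by
    have := sylvester_even_mod8 m (by omega)
    rwa [show 2 * m = n by omega] at this
  obtain ⟨qn, hqn⟩ : ∃ qn, sylvester n = 8 * qn + 7 := ⟨sylvester n / 8, by omega⟩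
  have hq : s = 8 * (qn : ℤ) + 7 := by rw [hs, hqn]; push_cast; ring
  set q : ℤ := (qn : ℤ)
  -- basic polynomial identities
  have h8r : 8 * r = s ^ 3 + 2 * s ^ 2 - 7 * s - 16 := by
    linear_combination 8 * hr + (s + 1) * han + 4 * han1
  have h8an1 : 8 * an1 = s ^ 3 - 9 * s := by
    linear_combination 4 * han1 + (s - 1) * han
  -- parities
  have hano : an % 2 = 1 := by
    have h1 : 4 * an = 64 * (q * q) + 120 * q + 52 := by
      linear_combination han + (s + 8 * q + 8) * hq
    obtain ⟨Q, hQ⟩ : ∃ Q : ℤ, 4 * an = 64 * Q + 120 * q + 52 := ⟨q * q, h1⟩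
    omega
  have han1o : an1 % 2 = 1 := by
    have h1 : 8 * an1 = 512 * (q * q * q) + 1344 * (q * q) + 1104 * q + 280 := by
      linear_combination h8an1 + (s ^ 2 + (8 * q + 7) * s + (8 * q + 7) ^ 2 - 9) * hq
    obtain ⟨C, Q, hQ⟩ : ∃ C Q : ℤ, 8 * an1 = 512 * C + 1344 * Q + 1104 * q + 280 :=
      ⟨q * q * q, q * q, h1⟩
    omega
  -- the five basic coprimalities via Bézout certificates
  have G1 : Int.gcd r an = 1 :=
    int_gcd_eq_one_of_bezout_pow2 r an 3 (8 * s - 16) (-4 * s ^ 2 + 4 * s + 24)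
      (by linear_combination (s - 2) * h8r + (-s ^ 2 + s + 6) * han) hano
  have G2 : Int.gcd r an1 = 1 :=
    int_gcd_eq_one_of_bezout_pow2 r an1 4 (8 * s - 8) (-8 * s - 8)
      (by linear_combination (s - 1) * h8r + (-s - 1) * h8an1) han1o
  have G3 : Int.gcd (s - 1) an = 1 :=
    int_gcd_eq_one_of_bezout_pow2 (s - 1) an 1 (s + 2) (-4)
      (by linear_combination (-1 : ℤ) * han) hano
  have G4 : Int.gcd (s - 1) an1 = 1 :=
    int_gcd_eq_one_of_bezout_pow2 (s - 1) an1 3 (s ^ 2 + s - 8) (-8)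
      (by linear_combination (-1 : ℤ) * h8an1) han1o
  have G5 : Int.gcd an an1 = 1 :=
    int_gcd_eq_one_of_bezout_pow2 an an1 4 (4 * s ^ 2 - 4 * s - 16) (-8 * s)
      (by linear_combination (s ^ 2 - s - 4) * han + (-s) * h8an1) han1o
  refine ⟨G1, G2, G3, G4, G5, ?_, ?_⟩
  · intro i hi
    rcases eq_or_lt_of_le hi with hin | hin
    · subst hin; rw [hAn]; exact G5
    · have hdv : a i ∣ r * (s - 1) := by
        have h1 : a i ∣ d := ⟨(sylvester i : ℤ), (ha i hin).symm⟩
        rwa [hd] at h1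
      exact int_gcd_eq_one_of_dvd_mul (a i) an1 r (s - 1) hdv G2 G4
  · intro i hin
    have hdv : a i ∣ r * (s - 1) := by
      have h1 : a i ∣ d := ⟨(sylvester i : ℤ), (ha i hin).symm⟩
      rwa [hd] at h1
    exact int_gcd_eq_one_of_dvd_mul (a i) an r (s - 1) hdv G1 G3
end

section
/- For every odd integer n ≥ 3, with the odd-case weights and r := −1 + a_n + a_{n+1} = d/(s_n − 1), one has gcd(r, a_n) = 1, gcd(r, a_{n+1}) = 1, gcd(s_n − 1, a_n) = 1, gcd(s_n − 1, a_{n+1}) = 1, and gcd(a_n, a_{n+1}) = 1; consequently gcd(a_i, a_{n+1}) = 1 for every i = 0, ..., n and gcd(a_i, a_n) = 1 for every i = 0, ..., n−1. -/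
lemma sylvester_odd_mod8 (m : ℕ) : sylvester (2*m+1) % 8 = 3 := by
  induction m with
  | zero => rfl
  | succ m ih =>
    have h1 := sylvester_two_le (2*m+1)
    obtain ⟨k, hk⟩ : ∃ k, sylvester (2*m+1) = 8*k+3 :=
      ⟨sylvester (2*m+1)/8, by omega⟩
    have e1 : sylvester (2*m+2) = sylvester (2*m+1) * (sylvester (2*m+1) - 1) + 1 := rfl
    have e2 : sylvester (2*m+3) = sylvester (2*m+2) * (sylvester (2*m+2) - 1) + 1 := rfl
    have h2 : sylvester (2*m+2) = 8*(8*k^2+5*k)+7 := by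
      rw [e1, hk, show 8*k+3-1 = 8*k+2 by omega]; ring
    set j := 8*k^2+5*k with hj
    have h3 : sylvester (2*m+3) = 8*(8*j^2+13*j+5)+3 := by
      rw [e2, h2, show 8*j+7-1 = 8*j+6 by omega]; ring
    have h4 : 2*(m+1)+1 = 2*m+3 := by ring
    rw [h4, h3]
    set l := 8*j^2+13*j+5
    omega

lemma gcd_one_of_combo (x y t u v : ℤ) (m : ℕ) (hx : x = 2*t+1)
    (h : u*x + v*y = 2^m) : Int.gcd x y = 1 := by
  by_contra hg
  obtain ⟨p, hp, hpd⟩ := Nat.exists_prime_and_dvd hg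
  have hpx : (p:ℤ) ∣ x := dvd_trans (Int.natCast_dvd_natCast.mpr hpd) (Int.gcd_dvd_left x y)
  have hpy : (p:ℤ) ∣ y := dvd_trans (Int.natCast_dvd_natCast.mpr hpd) (Int.gcd_dvd_right x y)
  have hp2 : (p:ℤ) ∣ 2^m := h ▸ dvd_add (Dvd.dvd.mul_left hpx u) (Dvd.dvd.mul_left hpy v)
  have hpp : Prime (p:ℤ) := Int.prime_iff_natAbs_prime.mpr (by simpa using hp)
  have hpd2 : (p:ℤ) ∣ 2 := hpp.dvd_of_dvd_pow hp2
  have hp2' : p ∣ 2 := by exact_mod_cast hpd2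
  have hpe : p = 2 := (Nat.prime_dvd_prime_iff_eq hp Nat.prime_two).mp hp2'
  subst hpe
  obtain ⟨e, he⟩ := hpx
  omega

/-- For odd `n ≥ 3`, with the odd-case weights and `r = -1 + aₙ + aₙ₊₁ = d/(sₙ - 1)`:
the coprimality statements needed for well-formedness. -/
theorem odd_case_weights_coprime (n : ℕ) (hn : 3 ≤ n) (ho : Odd n)
    (an an1 d r : ℤ) (a : ℕ → ℤ)
    (han : 4 * an = (sylvester n : ℤ) ^ 2 + 3 * (sylvester n : ℤ) - 6)
    (han1 : 4 * an1 = ((sylvester n : ℤ) - 3) * an - (sylvester n : ℤ) - 1)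
    (hr : r = -1 + an + an1)
    (hd : d = r * ((sylvester n : ℤ) - 1))
    (ha : ∀ i < n, a i * (sylvester i : ℤ) = d)
    (hAn : a n = an) (hAn1 : a (n + 1) = an1) :
    Int.gcd r an = 1 ∧ Int.gcd r an1 = 1 ∧
    Int.gcd ((sylvester n : ℤ) - 1) an = 1 ∧
    Int.gcd ((sylvester n : ℤ) - 1) an1 = 1 ∧
    Int.gcd an an1 = 1 ∧
    (∀ i ≤ n, Int.gcd (a i) an1 = 1) ∧
    (∀ i < n, Int.gcd (a i) an = 1) := by
  obtain ⟨m, hm⟩ := ho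
  have hmod : sylvester n % 8 = 3 := by
    have := sylvester_odd_mod8 m
    rwa [show 2*m+1 = n by omega] at this
  obtain ⟨k, hk⟩ : ∃ k : ℤ, (sylvester n : ℤ) = 8*k+3 :=
    ⟨(sylvester n : ℤ)/8, by omega⟩
  rw [hk] at han han1 hd ⊢
  have h16an1 : 16*an1 = 512*k^3+576*k^2+64*k-16 := by
    linear_combination 4*han1 + (8*k)*han
  have h16r : 16*r = 512*k^3+832*k^2+352*k+16 := by
    linear_combination 16*hr + h16an1 + 4*han
  have hv1 : 4*an = 64*k^2+72*k+12 := by linear_combination han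
  have hanodd : an = 2*(8*k^2+9*k+1)+1 := by linarith
  have han1odd : an1 = 2*(16*k^3+18*k^2+2*k-1)+1 := by linarith
  -- Bezout-type combinations
  have cA : (16 - 4*((8*k+3)+1)*((8*k+3)-2))*an + (16*((8*k+3)-2))*r = 2^4 := by
    linear_combination (4-((8*k+3)+1)*((8*k+3)-2))*han + ((8*k+3)-2)*h16r
  have cB : (-4)*an + ((8*k+3)+4)*(8*k+3-1) = 2^1 := by
    linear_combination -han
  have cC : (-16)*an1 + ((8*k+3)^2+(8*k+3)-18)*(8*k+3-1) = 2^2 := by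
    linear_combination -h16an1
  have cD : (-16*((8*k+3)+1))*an1 + (16*((8*k+3)-3))*r = 2^6 := by
    linear_combination ((8*k+3)-3)*h16r - ((8*k+3)+1)*h16an1
  have cE : (4*((8*k+3)-3)*((8*k+3)+2)-16)*an + (-16*((8*k+3)+2))*an1 = 2^5 := by
    linear_combination (((8*k+3)-3)*((8*k+3)+2)-4)*han - ((8*k+3)+2)*h16an1
  have g1 : Int.gcd r an = 1 := by
    rw [Int.gcd_comm]; exact gcd_one_of_combo _ _ _ _ _ _ hanodd cA
  have g2 : Int.gcd r an1 = 1 := by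
    rw [Int.gcd_comm]; exact gcd_one_of_combo _ _ _ _ _ _ han1odd cD
  have g3 : Int.gcd (8*k+3-1) an = 1 := by
    rw [Int.gcd_comm]; exact gcd_one_of_combo _ _ _ _ _ _ hanodd cB
  have g4 : Int.gcd (8*k+3-1) an1 = 1 := by
    rw [Int.gcd_comm]; exact gcd_one_of_combo _ _ _ _ _ _ han1odd cC
  have g5 : Int.gcd an an1 = 1 := gcd_one_of_combo _ _ _ _ _ _ hanodd cE
  refine ⟨g1, g2, g3, g4, g5, ?_, ?_⟩
  · intro i hi
    rcases Nat.lt_or_ge i n with hlt | hge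
    · have hdi : a i * (sylvester i : ℤ) = r * (8*k+3-1) := by
        rw [ha i hlt, hd]
      have c6 : ((-16*((8*k+3)+1))*(-16)*an1
            + (-16*((8*k+3)+1))*((8*k+3)^2+(8*k+3)-18)*(8*k+3-1)
            + (16*((8*k+3)-3))*(-16)*r) * an1
          + (16*((8*k+3)-3)*((8*k+3)^2+(8*k+3)-18)*(sylvester i:ℤ)) * (a i) = 2^8 := by
        linear_combination ((-16)*an1 + ((8*k+3)^2+(8*k+3)-18)*(8*k+3-1))*cD + 64*cC
          + 16*((8*k+3)-3)*((8*k+3)^2+(8*k+3)-18)*hdi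
      rw [Int.gcd_comm]
      exact gcd_one_of_combo _ _ _ _ _ _ han1odd c6
    · have hieq : i = n := le_antisymm hi hge
      subst hieq
      rw [hAn]; exact g5
  · intro i hlt
    have hdi : a i * (sylvester i : ℤ) = r * (8*k+3-1) := by
      rw [ha i hlt, hd]
    have c7 : ((16 - 4*((8*k+3)+1)*((8*k+3)-2))*(-4)*an
          + (16 - 4*((8*k+3)+1)*((8*k+3)-2))*((8*k+3)+4)*(8*k+3-1)
          + (16*((8*k+3)-2))*(-4)*r) * an
        + (16*((8*k+3)-2)*((8*k+3)+4)*(sylvester i:ℤ)) * (a i) = 2^5 := by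
      linear_combination ((-4)*an + ((8*k+3)+4)*(8*k+3-1))*cA + 16*cB
        + 16*((8*k+3)-2)*((8*k+3)+4)*hdi
    rw [Int.gcd_comm]
    exact gcd_one_of_combo _ _ _ _ _ _ hanodd c7
end

section
/- For every odd integer n ≥ 3, with the odd-case weights one has the congruences d ≡ 2 + 2a_n (mod a_{n+1}) and a_0 ≡ 1 + a_n (mod a_{n+1}). -/
/-- For odd `n ≥ 3`, with the odd-case weights:
`d ≡ 2 + 2aₙ` and `a₀ ≡ 1 + aₙ` modulo `aₙ₊₁`. -/
theorem odd_case_congruences (n : ℕ) (hn : 3 ≤ n) (ho : Odd n)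
    (an an1 d : ℤ) (a : ℕ → ℤ)
    (han : 4 * an = (sylvester n : ℤ) ^ 2 + 3 * (sylvester n : ℤ) - 6)
    (han1 : 4 * an1 = ((sylvester n : ℤ) - 3) * an - (sylvester n : ℤ) - 1)
    (hd : d = (-1 + an + an1) * ((sylvester n : ℤ) - 1))
    (ha : ∀ i < n, a i * (sylvester i : ℤ) = d)
    (hAn : a n = an) (hAn1 : a (n + 1) = an1) :
    d ≡ 2 + 2 * an [ZMOD an1] ∧ a 0 ≡ 1 + an [ZMOD an1] := by
  have hs0 : a 0 * 2 = d := by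
    have := ha 0 (by omega)
    simpa [sylvester] using this
  have hodd : Odd (sylvester n) := by
    obtain ⟨m, rfl⟩ : ∃ m, n = m + 1 := ⟨n - 1, by omega⟩
    have he : Even (sylvester m * (sylvester m - 1)) := by
      rcases Nat.even_or_odd (sylvester m) with h | h
      · exact h.mul_right _
      · exact (Nat.Odd.sub_odd h odd_one).mul_left _
    simpa [sylvester] using he.add_one
  obtain ⟨k, hk⟩ := hodd
  have ht : (sylvester n : ℤ) = 2 * (k : ℤ) + 1 := by exact_mod_cast congrArg (Nat.cast : ℕ → ℤ) hk
  constructor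
  · exact Int.modEq_iff_dvd.mpr ⟨-((sylvester n : ℤ) + 3), by linear_combination -hd + han1⟩
  · refine Int.modEq_iff_dvd.mpr ⟨-((k : ℤ) + 2), ?_⟩
    have h2 : (2 : ℤ) * (1 + an - a 0) = 2 * (an1 * (-((k : ℤ) + 2))) := by
      linear_combination -hd + han1 - hs0 + (-an1) * ht
    exact mul_left_cancel₀ two_ne_zero h2
end

section
/- For every odd integer n ≥ 3, with the odd-case weights and j_0 := (s_n − 3)/4, the fractional parts satisfy {j_0·a_i/a_{n+1}} = (s_n − 1)/(s_i·a_{n+1}) for each i = 0, ..., n−1 and {j_0·a_n/a_{n+1}} = (s_n + 1)/(4a_{n+1}); consequently the sum over i = 0, ..., n of {j_0·a_i/a_{n+1}} equals (5s_n − 7)/(4a_{n+1}), the quantity {j_0·a_1/a_{n+1}} + ··· + {j_0·a_{n−1}/a_{n+1}} + 2·{j_0·a_n/a_{n+1}} equals (s_n − 1)/a_{n+1}, and the difference of these two quantities equals (s_n − 3)/(4a_{n+1}). -/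
lemma sylvester_int_succ (n : ℕ) :
    (sylvester (n + 1) : ℤ) = (sylvester n : ℤ) * ((sylvester n : ℤ) - 1) + 1 := by
  have h := sylvester_two_le n
  show ((sylvester n * (sylvester n - 1) + 1 : ℕ) : ℤ) = _
  push_cast [Nat.cast_sub (by omega : 1 ≤ sylvester n)]
  ring

lemma sylvester_sub_one (n : ℕ) :
    (sylvester n : ℤ) - 1 = ∏ i ∈ Finset.range n, (sylvester i : ℤ) := by
  induction n with
  | zero => simp [sylvester]
  | succ n ih =>
    rw [Finset.prod_range_succ, ← ih, sylvester_int_succ]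
    ring

lemma sylvester_dvd {i n : ℕ} (h : i < n) :
    (sylvester i : ℤ) ∣ (sylvester n : ℤ) - 1 := by
  rw [sylvester_sub_one]
  exact Finset.dvd_prod_of_mem _ (Finset.mem_range.2 h)

lemma sylvester_ge_43 {n : ℕ} (h : 3 ≤ n) : 43 ≤ sylvester n := by
  induction n with
  | zero => omega
  | succ n ih =>
    rcases Nat.lt_or_ge n 3 with h3 | h3
    · have hn2 : n = 2 := by omega
      subst hn2
      norm_num [sylvester]
    · have h43 := ih h3
      show 43 ≤ sylvester n * (sylvester n - 1) + 1
      have h1 : 42 ≤ sylvester n - 1 := by omega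
      nlinarith

lemma sylvester_sum (n : ℕ) :
    ∑ i ∈ Finset.range n, (1 : ℚ) / (sylvester i : ℚ) =
      1 - 1 / ((sylvester n : ℚ) - 1) := by
  induction n with
  | zero => norm_num [sylvester]
  | succ n ih =>
    rw [Finset.sum_range_succ, ih]
    have h2 : (2 : ℚ) ≤ (sylvester n : ℚ) := by exact_mod_cast sylvester_two_le n
    have hs : (sylvester (n + 1) : ℚ) =
        (sylvester n : ℚ) * ((sylvester n : ℚ) - 1) + 1 := by
      exact_mod_cast sylvester_int_succ n
    rw [hs]
    have h0 : (sylvester n : ℚ) ≠ 0 := by linarith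
    have h1 : (sylvester n : ℚ) - 1 ≠ 0 := by linarith
    field_simp
    ring

/-- For odd `n ≥ 3`, with the odd-case weights and `j₀ = (sₙ - 3)/4`: the fractional
parts `{j₀ aᵢ / aₙ₊₁}`, the two relevant weighted sums, and the resulting log
discrepancy `(sₙ - 3)/(4aₙ₊₁)`. -/
theorem odd_case_fractional_parts_at_j0 (n : ℕ) (hn : 3 ≤ n) (ho : Odd n)
    (an an1 d j0 : ℤ) (a : ℕ → ℤ)
    (han : 4 * an = (sylvester n : ℤ) ^ 2 + 3 * (sylvester n : ℤ) - 6)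
    (han1 : 4 * an1 = ((sylvester n : ℤ) - 3) * an - (sylvester n : ℤ) - 1)
    (hd : d = (-1 + an + an1) * ((sylvester n : ℤ) - 1))
    (ha : ∀ i < n, a i * (sylvester i : ℤ) = d)
    (hAn : a n = an) (hAn1 : a (n + 1) = an1)
    (hj0 : 4 * j0 = (sylvester n : ℤ) - 3) :
    (∀ i < n, Int.fract ((j0 : ℚ) * (a i : ℚ) / (an1 : ℚ)) =
      ((sylvester n : ℚ) - 1) / ((sylvester i : ℚ) * (an1 : ℚ))) ∧
    Int.fract ((j0 : ℚ) * (a n : ℚ) / (an1 : ℚ)) =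
      ((sylvester n : ℚ) + 1) / (4 * (an1 : ℚ)) ∧
    (∑ i ∈ Finset.range (n + 1), Int.fract ((j0 : ℚ) * (a i : ℚ) / (an1 : ℚ))) =
      (5 * (sylvester n : ℚ) - 7) / (4 * (an1 : ℚ)) ∧
    (∑ i ∈ Finset.Ico 1 n, Int.fract ((j0 : ℚ) * (a i : ℚ) / (an1 : ℚ)))
        + 2 * Int.fract ((j0 : ℚ) * (a n : ℚ) / (an1 : ℚ)) =
      ((sylvester n : ℚ) - 1) / (an1 : ℚ) ∧
    (∑ i ∈ Finset.range (n + 1), Int.fract ((j0 : ℚ) * (a i : ℚ) / (an1 : ℚ)))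
        - ((∑ i ∈ Finset.Ico 1 n, Int.fract ((j0 : ℚ) * (a i : ℚ) / (an1 : ℚ)))
            + 2 * Int.fract ((j0 : ℚ) * (a n : ℚ) / (an1 : ℚ))) =
      ((sylvester n : ℚ) - 3) / (4 * (an1 : ℚ)) := by
  have hS : (43 : ℤ) ≤ (sylvester n : ℤ) := by exact_mod_cast sylvester_ge_43 hn
  -- key arithmetic identity: j0 * an = an1 + 1 + j0
  have key : j0 * an = an1 + 1 + j0 := by
    have h4 : 4 * (j0 * an) = 4 * (an1 + 1 + j0) := by
      linear_combination an * hj0 - han1 - hj0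
    linarith
  have h16 : 16 * an1 = (sylvester n : ℤ) ^ 3 - 19 * (sylvester n : ℤ) + 14 := by
    linear_combination 4 * han1 + ((sylvester n : ℤ) - 3) * han
  have hS2 : (sylvester n : ℤ) ^ 2 ≥ 43 * (sylvester n : ℤ) := by nlinarith
  have hS3 : (sylvester n : ℤ) ^ 3 ≥ 43 * (sylvester n : ℤ) ^ 2 := by nlinarith
  have han1pos : 0 < an1 := by linarith
  have han1qpos : (0 : ℚ) < (an1 : ℚ) := by exact_mod_cast han1pos
  have han1q : (an1 : ℚ) ≠ 0 := ne_of_gt han1qpos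
  have hSq : (43 : ℚ) ≤ (sylvester n : ℚ) := by exact_mod_cast hS
  -- Part A : i < n
  have hA : ∀ i < n, Int.fract ((j0 : ℚ) * (a i : ℚ) / (an1 : ℚ)) =
      ((sylvester n : ℚ) - 1) / ((sylvester i : ℚ) * (an1 : ℚ)) := by
    intro i hi
    obtain ⟨e, he⟩ := sylvester_dvd hi
    have hsi : (2 : ℤ) ≤ (sylvester i : ℤ) := by exact_mod_cast sylvester_two_le i
    have hsi0 : (sylvester i : ℤ) ≠ 0 := by linarith
    have hepos : 0 < e := by
      by_contra hc
      push_neg at hc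
      nlinarith
    have h2e : 2 * e ≤ (sylvester n : ℤ) - 1 := by nlinarith
    have helt : e < an1 := by linarith
    have hai : a i = (an + an1 - 1) * e := by
      have h1 : a i * (sylvester i : ℤ) = d := ha i hi
      have h2 : ((an + an1 - 1) * e) * (sylvester i : ℤ) = d := by
        rw [hd]; linear_combination (-(an + an1 - 1)) * he
      exact mul_right_cancel₀ hsi0 (h1.trans h2.symm)
    have hj : j0 * a i = e + an1 * ((1 + j0) * e) := by
      rw [hai]; linear_combination e * key
    have hjq : (j0 : ℚ) * (a i : ℚ) = (e : ℚ) + (an1 : ℚ) * (((1 + j0) * e : ℤ) : ℚ) := by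
      exact_mod_cast hj
    have hsplit : (j0 : ℚ) * (a i : ℚ) / (an1 : ℚ) =
        (e : ℚ) / (an1 : ℚ) + (((1 + j0) * e : ℤ) : ℚ) := by
      rw [hjq]; field_simp
    rw [hsplit, Int.fract_add_intCast]
    have heq : (0 : ℚ) ≤ (e : ℚ) := by exact_mod_cast hepos.le
    have heltq : (e : ℚ) < (an1 : ℚ) := by exact_mod_cast helt
    rw [Int.fract_eq_self.2 ⟨div_nonneg heq han1qpos.le, (div_lt_one han1qpos).2 heltq⟩]
    have heq2 : (sylvester n : ℚ) - 1 = (sylvester i : ℚ) * (e : ℚ) := by exact_mod_cast he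
    have hsiq : (sylvester i : ℚ) ≠ 0 := by
      have : (2 : ℚ) ≤ (sylvester i : ℚ) := by exact_mod_cast hsi
      linarith
    rw [heq2]
    field_simp
  -- Part B : i = n
  have hj0pos : 0 < 1 + j0 := by linarith
  have hj0lt : 1 + j0 < an1 := by linarith
  have hB : Int.fract ((j0 : ℚ) * (a n : ℚ) / (an1 : ℚ)) =
      ((sylvester n : ℚ) + 1) / (4 * (an1 : ℚ)) := by
    have hjq : (j0 : ℚ) * (a n : ℚ) = ((1 + j0 : ℤ) : ℚ) + (an1 : ℚ) * ((1 : ℤ) : ℚ) := by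
      rw [hAn]
      exact_mod_cast (by linarith : j0 * an = (1 + j0) + an1 * 1)
    have hsplit : (j0 : ℚ) * (a n : ℚ) / (an1 : ℚ) =
        ((1 + j0 : ℤ) : ℚ) / (an1 : ℚ) + ((1 : ℤ) : ℚ) := by
      rw [hjq]; field_simp
    rw [hsplit, Int.fract_add_intCast]
    have h1 : (0 : ℚ) ≤ ((1 + j0 : ℤ) : ℚ) := by exact_mod_cast hj0pos.le
    have h2 : ((1 + j0 : ℤ) : ℚ) < (an1 : ℚ) := by exact_mod_cast hj0lt
    rw [Int.fract_eq_self.2 ⟨div_nonneg h1 han1qpos.le, (div_lt_one han1qpos).2 h2⟩]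
    have h4 : (4 : ℚ) * ((1 + j0 : ℤ) : ℚ) = (sylvester n : ℚ) + 1 := by
      exact_mod_cast (by linarith : 4 * (1 + j0) = (sylvester n : ℤ) + 1)
    rw [show ((1 + j0 : ℤ) : ℚ) = ((sylvester n : ℚ) + 1) / 4 by linarith, div_div]
  -- sum over range n
  have hS1q : ((sylvester n : ℚ) - 1) ≠ 0 := by linarith
  have hsum : ∑ i ∈ Finset.range n, Int.fract ((j0 : ℚ) * (a i : ℚ) / (an1 : ℚ)) =
      ((sylvester n : ℚ) - 2) / (an1 : ℚ) := by
    rw [Finset.sum_congr rfl (fun i hi => hA i (Finset.mem_range.1 hi))]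
    have hre : ∀ i, ((sylvester n : ℚ) - 1) / ((sylvester i : ℚ) * (an1 : ℚ)) =
        (((sylvester n : ℚ) - 1) / (an1 : ℚ)) * ((1 : ℚ) / (sylvester i : ℚ)) := by
      intro i; ring
    simp_rw [hre]
    rw [← Finset.mul_sum, sylvester_sum n]
    field_simp
    ring
  have hIco : ∑ i ∈ Finset.Ico 1 n, Int.fract ((j0 : ℚ) * (a i : ℚ) / (an1 : ℚ)) =
      ((sylvester n : ℚ) - 2) / (an1 : ℚ)
        - ((sylvester n : ℚ) - 1) / (2 * (an1 : ℚ)) := by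
    rw [Finset.sum_Ico_eq_sub _ (by omega : 1 ≤ n), hsum, Finset.sum_range_one,
      hA 0 (by omega)]
    have h0 : (sylvester 0 : ℚ) = 2 := by norm_num [sylvester]
    rw [h0]
  refine ⟨hA, hB, ?_, ?_, ?_⟩
  · rw [Finset.sum_range_succ, hsum, hB]
    field_simp
    ring
  · rw [hIco, hB]
    field_simp
    ring
  · rw [Finset.sum_range_succ, hsum, hB, hIco]
    field_simp
    ring
end

section
/- For every even integer n ≥ 2, with the even-case weights one has (s_n − 1)/(2a_{n+1}) < 2/a_n; and for every odd integer n ≥ 3, with the odd-case weights one has (s_n − 3)/(4a_{n+1}) < 2/a_n. (Thus in each case the log discrepancy found at the non-quasismooth point is strictly smaller than the lower bound 2/a_n for the minimal log discrepancy away from that point.) -/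
lemma sylvester_ge_seven : ∀ n : ℕ, 2 ≤ n → 7 ≤ sylvester n := by
  intro n hn
  induction n with
  | zero => omega
  | succ m ih =>
    rcases Nat.lt_or_ge m 2 with hm | hm
    · interval_cases m
      · omega
      · simp [sylvester]
    · have h7 := ih hm
      simp only [sylvester]
      have h6 : 6 ≤ sylvester m - 1 := by omega
      nlinarith [h7, h6]

/-- The log discrepancy found at the non-quasismooth point is strictly smaller than
the lower bound `2/aₙ` for the minimal log discrepancy away from that point:
`(sₙ-1)/(2aₙ₊₁) < 2/aₙ` in the even case and `(sₙ-3)/(4aₙ₊₁) < 2/aₙ` in the odd case. -/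
theorem mld_smaller_than_quasismooth_bound :
    (∀ n : ℕ, 2 ≤ n → Even n → ∀ an an1 : ℤ,
      4 * an = (sylvester n : ℤ) ^ 2 + (sylvester n : ℤ) - 4 →
      2 * an1 = ((sylvester n : ℤ) - 1) * an - (sylvester n : ℤ) - 1 →
      ((sylvester n : ℚ) - 1) / (2 * (an1 : ℚ)) < 2 / (an : ℚ)) ∧
    (∀ n : ℕ, 3 ≤ n → Odd n → ∀ an an1 : ℤ,
      4 * an = (sylvester n : ℤ) ^ 2 + 3 * (sylvester n : ℤ) - 6 →
      4 * an1 = ((sylvester n : ℤ) - 3) * an - (sylvester n : ℤ) - 1 →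
      ((sylvester n : ℚ) - 3) / (4 * (an1 : ℚ)) < 2 / (an : ℚ)) := by
  constructor
  · intro n hn _ an an1 h1 h2
    have hS : (7 : ℚ) ≤ (sylvester n : ℚ) := by
      exact_mod_cast sylvester_ge_seven n hn
    set S : ℚ := (sylvester n : ℚ) with hSdef
    have h1' : 4 * (an : ℚ) = S ^ 2 + S - 4 := by
      have hc := congrArg ((Int.cast : ℤ → ℚ)) h1
      push_cast at hc
      linarith
    have h2' : 2 * (an1 : ℚ) = (S - 1) * (an : ℚ) - S - 1 := by
      have hc := congrArg ((Int.cast : ℤ → ℚ)) h2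
      push_cast at hc
      linarith
    have hA : (0 : ℚ) < (an : ℚ) := by nlinarith
    have hB : (0 : ℚ) < (an1 : ℚ) := by nlinarith
    rw [div_lt_div_iff₀ (by linarith) hA]
    nlinarith
  · intro n hn _ an an1 h1 h2
    have hS : (7 : ℚ) ≤ (sylvester n : ℚ) := by
      exact_mod_cast sylvester_ge_seven n (by omega)
    set S : ℚ := (sylvester n : ℚ) with hSdef
    have h1' : 4 * (an : ℚ) = S ^ 2 + 3 * S - 6 := by
      have hc := congrArg ((Int.cast : ℤ → ℚ)) h1
      push_cast at hc
      linarith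
    have h2' : 4 * (an1 : ℚ) = (S - 3) * (an : ℚ) - S - 1 := by
      have hc := congrArg ((Int.cast : ℤ → ℚ)) h2
      push_cast at hc
      linarith
    have hA : (0 : ℚ) < (an : ℚ) := by nlinarith
    have hB : (0 : ℚ) < (an1 : ℚ) := by nlinarith
    rw [div_lt_div_iff₀ (by linarith) hA]
    nlinarith
end

section
/- Let n ≥ 2 and let e_0, ..., e_n denote the standard basis of ℝ^{n+1}. If n is even, let S := {2e_0, 3e_1, s_2·e_2, ..., s_{n−1}·e_{n−1}, e_1 + e_2 + ··· + e_n}; if n is odd (n ≥ 3), let S := {2e_0, 3e_1, s_2·e_2, ..., s_{n−1}·e_{n−1}, e_1 + ··· + e_{n−1} + 2e_n}. Then the all-ones vector (1, 1, ..., 1) lies in the topological interior of the convex hull of the set ⋃_{m ∈ S} (m + [0,∞)^{n+1}) in ℝ^{n+1}. (This is the Newton-polytope interiority claim underlying the klt property of the weighted tangent cones.) -/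
/-- The vertex `sᵢ · eᵢ` of the Newton polytope, for `i = 0, …, n-1`
(recall `s₀ = 2`, `s₁ = 3`). -/
noncomputable def cornerGen (n : ℕ) (i : Fin n) : Fin (n + 1) → ℝ :=
  fun j => if (j : ℕ) = (i : ℕ) then (sylvester i : ℝ) else 0

/-- The exponent vector of the last monomial: `e₁ + ⋯ + eₙ` when `n` is even, and
`e₁ + ⋯ + e_{n-1} + 2eₙ` when `n` is odd. -/
noncomputable def lastGen (n : ℕ) : Fin (n + 1) → ℝ :=
  if Even n then fun j => if (j : ℕ) = 0 then 0 else 1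
  else fun j => if (j : ℕ) = 0 then 0 else if (j : ℕ) = n then 2 else 1

/-- For `n ≥ 2`, the all-ones vector lies in the interior of the convex hull of
`⋃_{m ∈ S} (m + [0,∞)^{n+1})`, where `S` consists of `2e₀, 3e₁, s₂e₂, …, s_{n-1}e_{n-1}`
together with `e₁ + ⋯ + eₙ` (for `n` even) or `e₁ + ⋯ + e_{n-1} + 2eₙ` (for `n` odd). -/
theorem all_ones_mem_interior_newton_polytope (n : ℕ) (hn : 2 ≤ n) :
    (1 : Fin (n + 1) → ℝ) ∈ interior (convexHull ℝ
      (⋃ m ∈ (Set.range (cornerGen n) ∪ {lastGen n}),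
        {x : Fin (n + 1) → ℝ | ∀ j, m j ≤ x j})) := by
  rw [mem_interior]
  refine ⟨Metric.ball 1 (1/15), ?_, Metric.isOpen_ball, Metric.mem_ball_self (by norm_num)⟩
  intro z hz
  have hz' : ∀ j, (14:ℝ)/15 < z j := by
    intro j
    have h1 : dist z (1 : Fin (n+1) → ℝ) < 1/15 := hz
    have h2 := (dist_pi_lt_iff (by norm_num : (0:ℝ) < 1/15)).1 h1 j
    have h3 : |z j - 1| < 1/15 := by simpa [Real.dist_eq] using h2
    linarith [(abs_lt.1 h3).1]
  set U : Set (Fin (n+1) → ℝ) :=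
    (⋃ m ∈ (Set.range (cornerGen n) ∪ {lastGen n}),
      {x : Fin (n + 1) → ℝ | ∀ j, m j ≤ x j}) with hU
  set x0 : Fin (n+1) → ℝ := fun j => if (j:ℕ) = 0 then (15/7) * z j else 0 with hx0def
  set x1 : Fin (n+1) → ℝ := fun j => if (j:ℕ) = 1 then 5 * (z j - 1/3) else 0 with hx1def
  set x2 : Fin (n+1) → ℝ := fun j =>
    if (j:ℕ) = 0 then 0 else if (j:ℕ) = 1 then 1 else 3 * z j with hx2def
  have hx0 : x0 ∈ U := by
    apply Set.mem_iUnion₂.2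
    refine ⟨cornerGen n ⟨0, by omega⟩, Or.inl ⟨⟨0, by omega⟩, rfl⟩, ?_⟩
    intro j
    simp only [cornerGen, hx0def]
    by_cases h : (j:ℕ) = 0
    · simp only [h, if_pos rfl]
      have := hz' j
      simp [sylvester]
      linarith
    · simp [h]
  have hx1 : x1 ∈ U := by
    apply Set.mem_iUnion₂.2
    refine ⟨cornerGen n ⟨1, by omega⟩, Or.inl ⟨⟨1, by omega⟩, rfl⟩, ?_⟩
    intro j
    simp only [cornerGen, hx1def]
    by_cases h : (j:ℕ) = 1
    · simp only [h, if_pos rfl]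
      have := hz' j
      have hs : sylvester 1 = 3 := rfl
      simp [hs]
      linarith
    · simp [h]
  have hx2 : x2 ∈ U := by
    apply Set.mem_iUnion₂.2
    refine ⟨lastGen n, Or.inr rfl, ?_⟩
    intro j
    have hzj := hz' j
    simp only [lastGen, hx2def]
    by_cases he : Even n <;> simp only [he, if_pos, if_neg, ite_true, ite_false] <;>
    · by_cases h0 : (j:ℕ) = 0
      · simp [h0]
      · by_cases h1 : (j:ℕ) = 1
        · have hn1 : (1:ℕ) ≠ n := by omega
          simp [h0, h1, hn1]
        · have hn0 : n ≠ 0 := by omega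
          have hn1' : n ≠ 1 := by omega
          by_cases h2 : (j:ℕ) = n <;> simp [h0, h1, h2, hn0, hn1'] <;> linarith
  have key : z = (2/3 : ℝ) • ((7/10 : ℝ) • x0 + (3/10 : ℝ) • x1) + (1/3 : ℝ) • x2 := by
    funext j
    simp only [Pi.add_apply, Pi.smul_apply, smul_eq_mul, hx0def, hx1def, hx2def]
    by_cases h0 : (j:ℕ) = 0
    · simp [h0]; try ring
    · by_cases h1 : (j:ℕ) = 1
      · simp [h0, h1]; try ring
      · simp [h0, h1]; try ring
  rw [key]
  have hc := convex_convexHull ℝ U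
  have hy : (7/10 : ℝ) • x0 + (3/10 : ℝ) • x1 ∈ convexHull ℝ U :=
    hc (subset_convexHull ℝ U hx0) (subset_convexHull ℝ U hx1)
      (by norm_num) (by norm_num) (by norm_num)
  exact hc hy (subset_convexHull ℝ U hx2) (by norm_num) (by norm_num) (by norm_num)
end
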